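/- arXiv:1011.4205 — 2 statements merged into one kernel-verified Lean document; each statement's English description precedes it below -/
import Mathlib

section
/- Let H³_k ∈ ℂ (k ∈ {−2, 0} ∪ {1, 2, …}) and H^j_k ∈ ℂ (j ≥ 5, k ∈ {−4, −2, 0} ∪ {1, 2, …}), and consider the Σ₅ family p₃ = z³ + H³₋₂ z² + H³₀ + ∑_{k≥1} H³_k z^{−k} and p_j = z^j + H^j_{−4} z⁴ + H^j_{−2} z² + H^j_0 + ∑_{k≥1} H^j_k z^{−k} for j ≥ 5. Then the family {p₃, p₅, p₆, p₇, …} is multiplicatively closed and z² p lies in its ℂ-linear span for every member p if and only if: H^j_k = 0 for all k ≥ 1 and all j in {3, 5, 6, 7, …} (so every member is a polynomial in z); H⁵₋₄ = H³₋₂, H⁵₋₂ = H³₀, H⁵₀ = 0; H⁶₋₄ = −(H³₋₂)², H⁶₋₂ = −2H³₀H³₋₂, H⁶₀ = −(H³₀)²; and for all j ≥ 5 the recursions H^{j+2}_{−4} = H^j_{−2} + (H³₋₂)² H^j_{−4}, H^{j+2}_{−2} = H^j_0 + 2H³₀H³₋₂ H^j_{−4}, H^{j+2}_0 = (H³₀)²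 H^j_{−4} hold. -/
noncomputable section

/-- `z^j` viewed as a formal Laurent series in `t = z⁻¹` (so `z^j = t^(-j)`). -/
def zp (j : ℤ) : LaurentSeries ℂ := HahnSeries.single (-j) 1

/-- The element `p₃ = z³ + H³₋₂ z² + H³₀ + ∑_{k ≥ 1} H³_k z^(-k)` of the `Σ₅` family. -/
def sigma5three (H : ℕ → ℤ → ℂ) : LaurentSeries ℂ :=
  zp 3 + H 3 (-2) • zp 2
    + HahnSeries.ofPowerSeries ℤ ℂ (PowerSeries.mk fun k => H 3 (k:ℤ))

/-- The elements `p_j = z^j + H^j_{-4} z⁴ + H^j_{-2} z² + H^j_0 + ∑_{k ≥ 1} H^j_k z^(-k)`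
(`j ≥ 5`) of the `Σ₅` family. -/
def sigma5 (H : ℕ → ℤ → ℂ) (j : ℕ) : LaurentSeries ℂ :=
  zp j + H j (-4) • zp 4 + H j (-2) • zp 2
    + HahnSeries.ofPowerSeries ℤ ℂ (PowerSeries.mk fun k => H j (k:ℤ))

/-- The `Σ₅` family `{p₃, p₅, p₆, p₇, …}` as a set of Laurent series. -/
def sigma5Set (H : ℕ → ℤ → ℂ) : Set (LaurentSeries ℂ) :=
  insert (sigma5three H) (sigma5 H '' {j | 5 ≤ j})

/-!
Every element of the span of the family is determined by its coefficients of `z³` and `z^j`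
(`j ≥ 5`): each member has coefficient `1` at its own leading power and `0` at the leading
powers of the others. So closure forces three identities,
`z² p₃ = p₅`, `z² p_j = p_{j+2} + H^j₋₄ p₆` and `p₃² - 2H³₋₂ z² p₃ = p₆ + 2H³₀ p₃`.
Their coefficients give the stated relations among the polar coefficients, and linear
recursions among the tails: the recursion for `z² p_j` kills the odd tail coefficients of
every `p_j` and `p₃`, and then the square `p₃²` kills the even ones.
Conversely, once the tails vanish the identities are polynomial identities in `z`, and the
series `a` with `a · span ⊆ span` form a ring containing `z²`, hence `p₆ ∈ ℂ[z²]`, then `p₃`,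
and then every `p_j`.
-/

theorem Submodule.eq_of_mem_span_image_of_dual {ι R M : Type*} [Ring R] [AddCommGroup M]
    [Module R M] {v : ι → M} {s : Set ι} (ℓ : ι → M →ₗ[R] R)
    (hℓ_self : ∀ i ∈ s, ℓ i (v i) = 1) (hℓ_ne : ∀ i ∈ s, ∀ j ∈ s, j ≠ i → ℓ i (v j) = 0)
    {x y : M} (hx : x ∈ span R (v '' s)) (hy : y ∈ span R (v '' s))
    (h : ∀ i ∈ s, ℓ i x = ℓ i y) : x = y := by
  obtain ⟨l, hl, hlxy⟩ :=
    (Finsupp.mem_span_image_iff_linearCombination R).1 (sub_mem hx hy)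
  have hl0 : l = 0 := by
    ext i
    by_cases hi : i ∈ s
    · have hℓl := congrArg (ℓ i) hlxy
      rw [Finsupp.apply_linearCombination, Finsupp.linearCombination_apply, map_sub, h i hi,
        sub_self, Finsupp.sum] at hℓl
      rw [Finsupp.coe_zero, Pi.zero_apply, ← hℓl, Finset.sum_eq_single i]
      · rw [Function.comp_apply, hℓ_self i hi, smul_eq_mul, mul_one]
      · intro j hj hji
        rw [Function.comp_apply, hℓ_ne i hi j (hl hj) hji, smul_zero]
      · intro hi'
        simp [Finsupp.notMem_support_iff.1 hi']
    · exact Finsupp.notMem_support_iff.1 fun h' => hi (hl h')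
  rw [← sub_eq_zero, ← hlxy, hl0, map_zero]

def Submodule.mulStabilizer {R A : Type*} [Ring R] [Ring A] [Module R A]
    (M : Submodule R A) : Subring A where
  carrier := {a | ∀ m ∈ M, a * m ∈ M}
  mul_mem' {a b} ha hb m hm := by rw [mul_assoc]; exact ha _ (hb m hm)
  one_mem' m hm := by rwa [one_mul]
  add_mem' {a b} ha hb m hm := by rw [add_mul]; exact M.add_mem (ha m hm) (hb m hm)
  zero_mem' m _ := by rw [zero_mul]; exact M.zero_mem
  neg_mem' {a} ha m hm := by rw [neg_mul]; exact M.neg_mem (ha m hm)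

theorem Submodule.mem_mulStabilizer_span_iff {R A : Type*} [Ring R] [Ring A] [Module R A]
    [SMulCommClass R A A] {S : Set A} {a : A} :
    a ∈ (span R S).mulStabilizer ↔ ∀ s ∈ S, a * s ∈ span R S := by
  refine ⟨fun ha s hs => ha s (subset_span hs), fun ha m hm => ?_⟩
  induction hm using span_induction with
  | mem s hs => exact ha s hs
  | zero => rw [mul_zero]; exact zero_mem _
  | add x y _ _ hx hy => rw [mul_add]; exact add_mem hx hy
  | smul c x _ hx => rw [mul_smul_comm]; exact smul_mem _ c hx

/-- Instance search does not find this for `LaurentSeries ℂ`: the `Algebra` instance it reaches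
goes through `PowerSeries`, and its scalar action is not reducibly the `HahnSeries` one. -/
instance HahnSeries.instSMulCommClassSelf {Γ R : Type*} [AddCommMonoid Γ] [PartialOrder Γ]
    [IsOrderedCancelAddMonoid Γ] [CommSemiring R] :
    SMulCommClass R (HahnSeries Γ R) (HahnSeries Γ R) :=
  ⟨fun c a x => by simp only [smul_eq_mul, ← HahnSeries.C_mul_eq_smul]; ring⟩

theorem HahnSeries.C_mem_mulStabilizer {Γ R : Type*} [AddCommMonoid Γ] [PartialOrder Γ]
    [IsOrderedCancelAddMonoid Γ] [CommRing R] (M : Submodule R (HahnSeries Γ R)) (c : R) :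
    C c ∈ M.mulStabilizer := fun m hm => by
  rw [C_mul_eq_smul]
  exact M.smul_mem c hm

theorem Nat.le_induction_two_step {m : ℕ} {P : ℕ → Prop} (h₀ : P m) (h₁ : P (m + 1))
    (h₂ : ∀ n ≥ m, P n → P (n + 2)) : ∀ n ≥ m, P n := by
  intro n
  induction n using Nat.strong_induction_on with
  | _ n ih =>
    intro hn
    rcases (by omega : n = m ∨ n = m + 1 ∨ m + 2 ≤ n) with rfl | rfl | hn2
    · exact h₀
    · exact h₁
    · obtain ⟨k, rfl⟩ : ∃ k, n = k + 2 := ⟨n - 2, by omega⟩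
      exact h₂ k (by omega) (ih k (by omega) (by omega))

open Finset.HasAntidiagonal in
theorem Finset.Nat.sum_antidiagonal_odd_eq_zero {R : Type*} [NonUnitalNonAssocSemiring R]
    {f : ℕ → R} (hf : ∀ l, f (2 * l + 1) = 0) (l : ℕ) :
    ∑ p ∈ antidiagonal (2 * l + 1), f p.1 * f p.2 = 0 := by
  refine Finset.sum_eq_zero fun p hp => ?_
  rw [Finset.HasAntidiagonal.mem_antidiagonal] at hp
  rcases Nat.even_or_odd' p.1 with ⟨m, hm | hm⟩
  · obtain ⟨m', hm'⟩ : ∃ m', p.2 = 2 * m' + 1 := ⟨l - m, by omega⟩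
    rw [hm', hf, mul_zero]
  · rw [hm, hf, zero_mul]

section TailRecursions

open Finset.HasAntidiagonal

variable {R : Type*} {t : ℕ → ℕ → R}

theorem odd_tails_eq_zero_of_recursion [Semiring R] {c : ℕ → R} (hj₁ : ∀ j ≥ 5, t j 1 = 0)
    (hj : ∀ j ≥ 5, ∀ k, t j (k + 2) = t (j + 2) k + c j * t 6 k) (l : ℕ) :
    ∀ j ≥ 5, t j (2 * l + 1) = 0 := by
  induction l with
  | zero => exact hj₁
  | succ l ih =>
    intro j hj5
    rw [show 2 * (l + 1) + 1 = 2 * l + 1 + 2 by ring, hj j hj5, ih (j + 2) (by omega),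
      ih 6 (by norm_num), mul_zero, add_zero]

theorem tail_three_eq_zero_of_recursions [CommRing R] [NoZeroDivisors R] [NeZero (2 : R)]
    (h₃₁ : t 3 1 = 0) (h₃₂ : t 3 2 = 0)
    (h₃₅ : ∀ k, t 3 (k + 2) = t 5 k)
    (h₆ : ∀ k, t 6 k = 2 * t 3 (k + 3) + ∑ p ∈ antidiagonal k, t 3 p.1 * t 3 p.2
      - 2 * t 3 0 * t 3 k)
    (hodd : ∀ l, ∀ j ≥ 5, t j (2 * l + 1) = 0) : ∀ k ≥ 1, t 3 k = 0 := by
  have hodd₃ : ∀ l, t 3 (2 * l + 1) = 0 := by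
    rintro (_ | l)
    · exact h₃₁
    · rw [show 2 * (l + 1) + 1 = 2 * l + 1 + 2 by ring, h₃₅, hodd l 5 le_rfl]
  intro k hk
  obtain ⟨m, rfl | rfl⟩ := Nat.even_or_odd' k
  · obtain rfl | ⟨l, rfl⟩ : m = 1 ∨ ∃ l, m = l + 2 := by
      rcases m with _ | _ | l <;> simp_all
    · exact h₃₂
    · have h := h₆ (2 * l + 1)
      rw [hodd l 6 (by norm_num), Finset.Nat.sum_antidiagonal_odd_eq_zero hodd₃, hodd₃,
        mul_zero, sub_zero, add_zero, eq_comm, mul_eq_zero] at h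
      rw [show 2 * (l + 2) = 2 * l + 1 + 3 by ring]
      exact h.resolve_left two_ne_zero
  · exact hodd₃ m

theorem tails_eq_zero_of_recursions [CommRing R] [NoZeroDivisors R] [NeZero (2 : R)]
    {c : ℕ → R} (h₃₁ : t 3 1 = 0) (h₃₂ : t 3 2 = 0)
    (h₃₅ : ∀ k, t 3 (k + 2) = t 5 k)
    (h₆ : ∀ k, t 6 k = 2 * t 3 (k + 3) + ∑ p ∈ antidiagonal k, t 3 p.1 * t 3 p.2
      - 2 * t 3 0 * t 3 k)
    (hj₁ : ∀ j ≥ 5, t j 1 = 0) (hj : ∀ j ≥ 5, ∀ k, t j (k + 2) = t (j + 2) k + c j * t 6 k) :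
    (∀ k ≥ 1, t 3 k = 0) ∧ ∀ j ≥ 5, ∀ k ≥ 1, t j k = 0 := by
  have hT₃ :=
    tail_three_eq_zero_of_recursions h₃₁ h₃₂ h₃₅ h₆ (odd_tails_eq_zero_of_recursion hj₁ hj)
  have hT₅ : ∀ k ≥ 1, t 5 k = 0 := fun k hk => by rw [← h₃₅, hT₃ _ (by omega)]
  have hT₆ : ∀ k ≥ 1, t 6 k = 0 := by
    intro k hk
    have hsum : ∑ p ∈ antidiagonal k, t 3 p.1 * t 3 p.2 = 0 := by
      refine Finset.sum_eq_zero fun p hp => ?_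
      rw [mem_antidiagonal] at hp
      rcases Nat.eq_zero_or_pos p.1 with h0 | hpos
      · rw [hT₃ p.2 (by omega), mul_zero]
      · rw [hT₃ p.1 hpos, zero_mul]
    rw [h₆, hsum, hT₃ _ (by omega), hT₃ k hk]
    ring
  refine ⟨hT₃, Nat.le_induction_two_step hT₅ hT₆ fun j hj5 ih k hk => ?_⟩
  rw [← sub_eq_of_eq_add (hj j hj5 k), ih _ (by omega), hT₆ k hk, mul_zero, sub_zero]

end TailRecursions

theorem coeff_zp (m n : ℤ) : (zp m).coeff n = if n = -m then 1 else 0 := by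
  rw [zp, HahnSeries.coeff_single]
  congr

theorem coeff_zp_mul (m : ℤ) (f : LaurentSeries ℂ) (n : ℤ) :
    (zp m * f).coeff n = f.coeff (n + m) := by
  rw [zp, HahnSeries.coeff_single_mul, one_mul, sub_neg_eq_add]

theorem zp_mul_zp (m n : ℤ) : zp m * zp n = zp (m + n) := by
  rw [zp, zp, zp, HahnSeries.single_mul_single, one_mul, neg_add]

theorem zp_natCast (n : ℕ) : zp n = zp 1 ^ n := by
  rw [zp, zp, HahnSeries.single_pow, one_pow, nsmul_eq_mul, mul_neg, mul_one]

theorem zp_ofNat (n : ℕ) [n.AtLeastTwo] :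
    zp (no_index (OfNat.ofNat n)) = zp 1 ^ (OfNat.ofNat n : ℕ) := by
  rw [← zp_natCast, Nat.cast_ofNat]

/-- The power series part `∑_{k ≥ 0} H^j_k z^(-k)` of `p_j`, constant term included. -/
def sigma5Tail (H : ℕ → ℤ → ℂ) (j : ℕ) : LaurentSeries ℂ :=
  HahnSeries.ofPowerSeries ℤ ℂ (PowerSeries.mk fun k => H j k)

section Coefficients

variable (H : ℕ → ℤ → ℂ) {j : ℕ}

theorem sigma5three_eq : sigma5three H = zp 3 + H 3 (-2) • zp 2 + sigma5Tail H 3 := rfl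

theorem sigma5_eq : sigma5 H j = zp j + H j (-4) • zp 4 + H j (-2) • zp 2 + sigma5Tail H j := rfl

theorem coeff_sigma5Tail (n : ℤ) : (sigma5Tail H j).coeff n = if n < 0 then 0 else H j n := by
  rw [sigma5Tail, PowerSeries.coeff_coe]
  split_ifs with hn
  · rfl
  · rw [PowerSeries.coeff_mk, Int.natAbs_of_nonneg (not_lt.1 hn)]

open Finset.HasAntidiagonal in
theorem coeff_sigma5Tail_sq_natCast (k : ℕ) :
    (sigma5Tail H j ^ 2).coeff k = ∑ p ∈ antidiagonal k, H j p.1 * H j p.2 := by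
  rw [sigma5Tail, ← map_pow, LaurentSeries.coeff_coe_powerSeries, sq, PowerSeries.coeff_mul]
  simp only [PowerSeries.coeff_mk]

theorem coeff_sigma5Tail_sq_of_neg {n : ℤ} (hn : n < 0) : (sigma5Tail H j ^ 2).coeff n = 0 := by
  rw [sigma5Tail, ← map_pow, PowerSeries.coeff_coe, if_pos hn]

theorem coeff_sigma5three (n : ℤ) : (sigma5three H).coeff n =
    if n = -3 then 1 else if n = -2 then H 3 (-2) else if n < 0 then 0 else H 3 n := by
  simp only [sigma5three_eq, HahnSeries.coeff_add, HahnSeries.coeff_smul, coeff_zp,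
    coeff_sigma5Tail, smul_eq_mul]
  split_ifs <;> first | omega | simp

theorem coeff_sigma5three_natCast (k : ℕ) : (sigma5three H).coeff k = H 3 k := by
  rw [coeff_sigma5three]
  split_ifs <;> first | rfl | omega | contradiction

theorem coeff_sigma5three_neg_natCast {i : ℕ} (hi : 5 ≤ i) : (sigma5three H).coeff (-i) = 0 := by
  rw [coeff_sigma5three]
  split_ifs <;> first | rfl | omega

theorem coeff_sigma5 (hj : 5 ≤ j) (n : ℤ) : (sigma5 H j).coeff n =
    if n = -j then 1 else if n = -4 then H j (-4) else if n = -2 then H j (-2)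
      else if n < 0 then 0 else H j n := by
  simp only [sigma5_eq, HahnSeries.coeff_add, HahnSeries.coeff_smul, coeff_zp,
    coeff_sigma5Tail, smul_eq_mul]
  split_ifs <;> first | omega | simp

theorem coeff_sigma5_natCast (hj : 5 ≤ j) (k : ℕ) : (sigma5 H j).coeff k = H j k := by
  rw [coeff_sigma5 H hj]
  split_ifs <;> first | rfl | omega | contradiction

theorem coeff_sigma5_neg_natCast (hj : 5 ≤ j) {i : ℕ} (hi : i = 3 ∨ 5 ≤ i) :
    (sigma5 H j).coeff (-i) = if i = j then 1 else 0 := by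
  rw [coeff_sigma5 H hj]
  split_ifs <;> first | rfl | omega

theorem coeff_sigma5_of_neg_five_lt (hj : 5 ≤ j) (n : ℤ) (hn : -5 < n) :
    (sigma5 H j).coeff n =
      if n = -4 then H j (-4) else if n = -2 then H j (-2) else if n < 0 then 0 else H j n := by
  rw [coeff_sigma5 H hj]
  split_ifs <;> first | rfl | omega

theorem sigma5three_mul_self_sub :
    sigma5three H * sigma5three H - (2 * H 3 (-2)) • (zp 2 * sigma5three H)
      = (zp 3 + sigma5Tail H 3) ^ 2 - H 3 (-2) ^ 2 • zp 4 := by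
  rw [sigma5three_eq, show (4 : ℤ) = 2 + 2 by norm_num, ← zp_mul_zp]
  simp only [← HahnSeries.C_mul_eq_smul, map_mul, map_pow, map_ofNat]
  ring

theorem coeff_sigma5three_mul_self_sub (n : ℤ) :
    (sigma5three H * sigma5three H - (2 * H 3 (-2)) • (zp 2 * sigma5three H)).coeff n
      = (if n = -6 then 1 else 0) + 2 * (sigma5Tail H 3).coeff (n + 3)
        + (sigma5Tail H 3 ^ 2).coeff n - if n = -4 then H 3 (-2) ^ 2 else 0 := by
  rw [sigma5three_mul_self_sub, add_sq, sq (zp 3), zp_mul_zp, mul_assoc, two_mul]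
  simp only [HahnSeries.coeff_sub, HahnSeries.coeff_add, HahnSeries.coeff_smul, coeff_zp,
    coeff_zp_mul, smul_eq_mul]
  split_ifs <;> first | omega | ring

end Coefficients

theorem sigma5Tail_eq_C {H : ℕ → ℤ → ℂ} {j : ℕ} (h : ∀ k : ℕ, 1 ≤ k → H j k = 0) :
    sigma5Tail H j = HahnSeries.C (H j 0) := by
  rw [sigma5Tail, ← HahnSeries.ofPowerSeries_C]
  congr 1
  ext k
  rw [PowerSeries.coeff_mk, PowerSeries.coeff_C]
  split_ifs with hk
  · rw [hk, Nat.cast_zero]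
  · exact h k (Nat.one_le_iff_ne_zero.2 hk)

section Span

variable {H : ℕ → ℤ → ℂ}

theorem sigma5three_mem_sigma5Set : sigma5three H ∈ sigma5Set H := Set.mem_insert _ _

theorem sigma5_mem_sigma5Set {j : ℕ} (hj : 5 ≤ j) : sigma5 H j ∈ sigma5Set H :=
  Set.mem_insert_of_mem _ ⟨j, hj, rfl⟩

theorem sigma5Set_eq_image :
    sigma5Set H = Function.update (sigma5 H) 3 (sigma5three H) '' insert 3 {j | 5 ≤ j} := by
  rw [Set.image_insert_eq, Function.update_self, sigma5Set]
  congr 1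
  refine Set.image_congr fun j hj => (Function.update_of_ne ?_ _ _).symm
  exact fun h => by simp [h] at hj

theorem eq_of_mem_span_sigma5Set {f g : LaurentSeries ℂ}
    (hf : f ∈ Submodule.span ℂ (sigma5Set H)) (hg : g ∈ Submodule.span ℂ (sigma5Set H))
    (h₃ : f.coeff (-3) = g.coeff (-3)) (h : ∀ i : ℕ, 5 ≤ i → f.coeff (-i) = g.coeff (-i)) :
    f = g := by
  rw [sigma5Set_eq_image] at hf hg
  refine Submodule.eq_of_mem_span_image_of_dual
    (fun i : ℕ => HahnSeries.coeff.linearMap (-(i : ℤ))) ?_ ?_ hf hg ?_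
  · rintro i (rfl | hi)
    · simp [coeff_sigma5three]
    · rw [Set.mem_ofPred_eq] at hi
      simp [Function.update_of_ne (by omega : i ≠ 3), coeff_sigma5_neg_natCast H hi (.inr hi)]
  · rintro i hi j (rfl | hj) hji
    · rw [Set.mem_insert_iff, Set.mem_ofPred_eq] at hi
      simp [coeff_sigma5three_neg_natCast H (by omega : 5 ≤ i)]
    · rw [Set.mem_insert_iff, Set.mem_ofPred_eq] at hi
      rw [Set.mem_ofPred_eq] at hj
      simp [Function.update_of_ne (by omega : j ≠ 3), coeff_sigma5_neg_natCast H hj hi, hji.symm]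
  · rintro i (rfl | hi)
    · exact h₃
    · exact h i hi

theorem zp_two_mul_sigma5three_eq_of_mem_span
    (h : zp 2 * sigma5three H ∈ Submodule.span ℂ (sigma5Set H)) :
    zp 2 * sigma5three H = sigma5 H 5 := by
  refine eq_of_mem_span_sigma5Set h (Submodule.subset_span (sigma5_mem_sigma5Set le_rfl)) ?_ ?_
  · simp [coeff_zp_mul, coeff_sigma5three, coeff_sigma5 H (le_refl 5)]
  · intro i hi
    rw [coeff_zp_mul, coeff_sigma5three, coeff_sigma5 H (le_refl 5)]
    split_ifs <;> first | rfl | omega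

theorem zp_two_mul_sigma5_eq_of_mem_span {j : ℕ} (hj : 5 ≤ j)
    (h : zp 2 * sigma5 H j ∈ Submodule.span ℂ (sigma5Set H)) :
    zp 2 * sigma5 H j = sigma5 H (j + 2) + H j (-4) • sigma5 H 6 := by
  have hmem : sigma5 H (j + 2) + H j (-4) • sigma5 H 6 ∈ Submodule.span ℂ (sigma5Set H) :=
    add_mem (Submodule.subset_span (sigma5_mem_sigma5Set (by omega)))
      (Submodule.smul_mem _ _ (Submodule.subset_span (sigma5_mem_sigma5Set (by norm_num))))
  refine eq_of_mem_span_sigma5Set h hmem ?_ ?_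
  all_goals
    intros
    simp only [coeff_zp_mul, HahnSeries.coeff_add, HahnSeries.coeff_smul, smul_eq_mul,
      coeff_sigma5 H hj, coeff_sigma5 H (by omega : 5 ≤ j + 2),
      coeff_sigma5 H (by norm_num : 5 ≤ 6)]
    push_cast
    split_ifs <;> first | omega | simp

theorem sigma5three_mul_self_sub_eq_of_mem_span
    (h : sigma5three H * sigma5three H ∈ Submodule.span ℂ (sigma5Set H))
    (h' : zp 2 * sigma5three H ∈ Submodule.span ℂ (sigma5Set H)) :
    sigma5three H * sigma5three H - (2 * H 3 (-2)) • (zp 2 * sigma5three H)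
      = sigma5 H 6 + (2 * H 3 0) • sigma5three H := by
  have hmem : sigma5 H 6 + (2 * H 3 0) • sigma5three H ∈ Submodule.span ℂ (sigma5Set H) :=
    add_mem (Submodule.subset_span (sigma5_mem_sigma5Set (by norm_num)))
      (Submodule.smul_mem _ _ (Submodule.subset_span sigma5three_mem_sigma5Set))
  refine eq_of_mem_span_sigma5Set (sub_mem h (Submodule.smul_mem _ _ h')) hmem ?_ fun i hi => ?_
  · rw [coeff_sigma5three_mul_self_sub, coeff_sigma5Tail_sq_of_neg H (by norm_num)]
    simp [coeff_sigma5Tail, coeff_sigma5three, coeff_sigma5 H (by norm_num : 5 ≤ 6)]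
  · rw [coeff_sigma5three_mul_self_sub, coeff_sigma5Tail_sq_of_neg H (by omega)]
    simp only [coeff_sigma5Tail, HahnSeries.coeff_add, HahnSeries.coeff_smul, smul_eq_mul,
      coeff_sigma5three, coeff_sigma5 H (by norm_num : 5 ≤ 6)]
    split_ifs <;> first | omega | simp

end Span

section CoeffRelations

variable {H : ℕ → ℤ → ℂ}

theorem coeff_relations_of_zp_two_mul_sigma5three_eq (h : zp 2 * sigma5three H = sigma5 H 5) :
    H 5 (-4) = H 3 (-2) ∧ H 5 (-2) = H 3 0 ∧ H 3 1 = 0 ∧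
      ∀ k : ℕ, H 3 (k + 2 : ℕ) = H 5 k := by
  have hc : ∀ n, (sigma5three H).coeff (n + 2) = (sigma5 H 5).coeff n := fun n => by
    rw [← coeff_zp_mul, h]
  refine ⟨?_, ?_, ?_, fun k => ?_⟩
  · simpa [coeff_sigma5three, coeff_sigma5 H (le_refl 5)] using (hc (-4)).symm
  · simpa [coeff_sigma5three, coeff_sigma5 H (le_refl 5)] using (hc (-2)).symm
  · simpa [coeff_sigma5three, coeff_sigma5 H (le_refl 5)] using hc (-1)
  · rw [← coeff_sigma5three_natCast H, ← coeff_sigma5_natCast H le_rfl, Nat.cast_add,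
      Nat.cast_two, hc]

theorem coeff_relations_of_zp_two_mul_sigma5_eq {j : ℕ} (hj : 5 ≤ j)
    (h : zp 2 * sigma5 H j = sigma5 H (j + 2) + H j (-4) • sigma5 H 6) :
    H j (-2) = H (j + 2) (-4) + H j (-4) * H 6 (-4) ∧
      H j 0 = H (j + 2) (-2) + H j (-4) * H 6 (-2) ∧ H j 1 = 0 ∧
      ∀ k : ℕ, H j (k + 2 : ℕ) = H (j + 2) k + H j (-4) * H 6 k := by
  have hc : ∀ n, (sigma5 H j).coeff (n + 2)
      = (sigma5 H (j + 2)).coeff n + H j (-4) * (sigma5 H 6).coeff n := fun n => by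
    rw [← coeff_zp_mul, h, HahnSeries.coeff_add, HahnSeries.coeff_smul, smul_eq_mul]
  have hⱼ := coeff_sigma5_of_neg_five_lt H hj
  have hⱼ₂ := coeff_sigma5_of_neg_five_lt H (by omega : 5 ≤ j + 2)
  have h₆ := coeff_sigma5_of_neg_five_lt H (by norm_num : 5 ≤ 6)
  refine ⟨?_, ?_, ?_, fun k => ?_⟩
  · simpa [hⱼ, hⱼ₂, h₆] using hc (-4)
  · simpa [hⱼ, hⱼ₂, h₆] using hc (-2)
  · simpa [hⱼ, hⱼ₂, h₆] using hc (-1)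
  · rw [← coeff_sigma5_natCast H hj, ← coeff_sigma5_natCast H (by omega : 5 ≤ j + 2),
      ← coeff_sigma5_natCast H (by norm_num : 5 ≤ 6), Nat.cast_add, Nat.cast_two, hc]

open Finset.HasAntidiagonal in
theorem coeff_relations_of_sigma5three_mul_self_sub_eq
    (h : sigma5three H * sigma5three H - (2 * H 3 (-2)) • (zp 2 * sigma5three H)
      = sigma5 H 6 + (2 * H 3 0) • sigma5three H) :
    H 6 (-4) = -H 3 (-2) ^ 2 ∧ H 6 (-2) = 2 * H 3 1 - 2 * H 3 0 * H 3 (-2) ∧ H 3 2 = 0 ∧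
      ∀ k : ℕ, H 6 k = 2 * H 3 (k + 3 : ℕ)
        + ∑ p ∈ antidiagonal k, H 3 p.1 * H 3 p.2 - 2 * H 3 0 * H 3 k := by
  have hc : ∀ n, (if n = -6 then 1 else 0) + 2 * (sigma5Tail H 3).coeff (n + 3)
        + (sigma5Tail H 3 ^ 2).coeff n - (if n = -4 then H 3 (-2) ^ 2 else 0)
      = (sigma5 H 6).coeff n + 2 * H 3 0 * (sigma5three H).coeff n := fun n => by
    rw [← coeff_sigma5three_mul_self_sub, h, HahnSeries.coeff_add, HahnSeries.coeff_smul,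
      smul_eq_mul]
  have h₆ := coeff_sigma5_of_neg_five_lt H (by norm_num : 5 ≤ 6)
  refine ⟨?_, ?_, ?_, fun k => ?_⟩
  · simpa [coeff_sigma5Tail, coeff_sigma5Tail_sq_of_neg, h₆, coeff_sigma5three] using
      (hc (-4)).symm
  · have h₂ : 2 * H 3 1 = H 6 (-2) + 2 * H 3 0 * H 3 (-2) := by
      simpa [coeff_sigma5Tail, coeff_sigma5Tail_sq_of_neg, h₆, coeff_sigma5three] using hc (-2)
    linear_combination -h₂
  · simpa [coeff_sigma5Tail, coeff_sigma5Tail_sq_of_neg, h₆, coeff_sigma5three] using hc (-1)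
  · have hk := hc k
    rw [if_neg (by omega), if_neg (by omega), coeff_sigma5Tail_sq_natCast,
      coeff_sigma5_natCast H (by norm_num), coeff_sigma5three_natCast, coeff_sigma5Tail,
      if_neg (by omega)] at hk
    push_cast
    linear_combination -hk

theorem conditions_of_identities (h₁ : zp 2 * sigma5three H = sigma5 H 5)
    (h₂ : ∀ j ≥ 5, zp 2 * sigma5 H j = sigma5 H (j + 2) + H j (-4) • sigma5 H 6)
    (h₃ : sigma5three H * sigma5three H - (2 * H 3 (-2)) • (zp 2 * sigma5three H)
      = sigma5 H 6 + (2 * H 3 0) • sigma5three H) :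
    (∀ k : ℕ, 1 ≤ k → H 3 (k:ℤ) = 0 ∧ ∀ j : ℕ, 5 ≤ j → H j (k:ℤ) = 0) ∧
     (H 5 (-4) = H 3 (-2) ∧ H 5 (-2) = H 3 0 ∧ H 5 0 = 0) ∧
     (H 6 (-4) = -(H 3 (-2))^2 ∧ H 6 (-2) = -(2 * H 3 0 * H 3 (-2)) ∧
        H 6 0 = -(H 3 0)^2) ∧
     (∀ j : ℕ, 5 ≤ j →
        H (j+2) (-4) = H j (-2) + (H 3 (-2))^2 * H j (-4) ∧
        H (j+2) (-2) = H j 0 + 2 * H 3 0 * H 3 (-2) * H j (-4) ∧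
        H (j+2) 0 = (H 3 0)^2 * H j (-4)) := by
  obtain ⟨h₅₄, h₅₂, h₃₁, h₃₅⟩ := coeff_relations_of_zp_two_mul_sigma5three_eq h₁
  obtain ⟨h₆₄, h₆₂, h₃₂, h₆⟩ := coeff_relations_of_sigma5three_mul_self_sub_eq h₃
  have hrel := fun j hj => coeff_relations_of_zp_two_mul_sigma5_eq hj (h₂ j hj)
  obtain ⟨hT₃, hTⱼ⟩ := tails_eq_zero_of_recursions (t := fun j k => H j k) (c := fun j => H j (-4))
    (by exact_mod_cast h₃₁) (by exact_mod_cast h₃₂) h₃₅ h₆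
    (fun j hj => by exact_mod_cast (hrel j hj).2.2.1) fun j hj => (hrel j hj).2.2.2
  have h₅₀ : H 5 0 = 0 := by simpa [h₃₂] using (h₃₅ 0).symm
  have h₆₀ : H 6 0 = -(H 3 0) ^ 2 := by
    have h₃₃ : H 3 3 = 0 := by exact_mod_cast hT₃ 3 (by norm_num)
    have h := h₆ 0
    simp only [Nat.cast_zero, zero_add, Nat.cast_ofNat, h₃₃, Finset.Nat.antidiagonal_zero,
      Finset.sum_singleton] at h
    linear_combination h
  refine ⟨fun k hk => ⟨hT₃ k hk, fun j hj => hTⱼ j hj k hk⟩, ⟨h₅₄, h₅₂, h₅₀⟩,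
    ⟨h₆₄, by rw [h₆₂, h₃₁]; ring, h₆₀⟩, fun j hj => ?_⟩
  obtain ⟨r₄, r₂, -, r⟩ := hrel j hj
  have hⱼ₂ : H j 2 = 0 := by exact_mod_cast hTⱼ j hj 2 (by norm_num)
  refine ⟨by linear_combination -r₄ - H j (-4) * h₆₄, ?_, ?_⟩
  · linear_combination -r₂ - H j (-4) * h₆₂ - 2 * H j (-4) * h₃₁
  · have r₀ := r 0
    simp only [Nat.cast_zero, zero_add, Nat.cast_ofNat, hⱼ₂] at r₀
    linear_combination -r₀ - H j (-4) * h₆₀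

end CoeffRelations

section Converse

variable {H : ℕ → ℤ → ℂ}

theorem zp_two_mul_sigma5three_eq_of_tail_eq_zero (h₃ : ∀ k : ℕ, 1 ≤ k → H 3 k = 0)
    (h₅ : ∀ k : ℕ, 1 ≤ k → H 5 k = 0) (h₅₄ : H 5 (-4) = H 3 (-2)) (h₅₂ : H 5 (-2) = H 3 0)
    (h₅₀ : H 5 0 = 0) : zp 2 * sigma5three H = sigma5 H 5 := by
  rw [sigma5three_eq, sigma5_eq, sigma5Tail_eq_C h₃, sigma5Tail_eq_C h₅, h₅₄, h₅₂, h₅₀]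
  simp only [← HahnSeries.C_mul_eq_smul, map_zero, zp_ofNat, zp_natCast]
  ring

theorem zp_two_mul_sigma5_eq_of_tail_eq_zero {j : ℕ}
    (hⱼ : ∀ k : ℕ, 1 ≤ k → H j k = 0) (hⱼ₂ : ∀ k : ℕ, 1 ≤ k → H (j + 2) k = 0)
    (h₆ : ∀ k : ℕ, 1 ≤ k → H 6 k = 0) (h₆₄ : H 6 (-4) = -(H 3 (-2)) ^ 2)
    (h₆₂ : H 6 (-2) = -(2 * H 3 0 * H 3 (-2))) (h₆₀ : H 6 0 = -(H 3 0) ^ 2)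
    (hr₄ : H (j + 2) (-4) = H j (-2) + (H 3 (-2)) ^ 2 * H j (-4))
    (hr₂ : H (j + 2) (-2) = H j 0 + 2 * H 3 0 * H 3 (-2) * H j (-4))
    (hr₀ : H (j + 2) 0 = (H 3 0) ^ 2 * H j (-4)) :
    zp 2 * sigma5 H j = sigma5 H (j + 2) + H j (-4) • sigma5 H 6 := by
  rw [sigma5_eq, sigma5_eq, sigma5_eq, sigma5Tail_eq_C hⱼ, sigma5Tail_eq_C hⱼ₂,
    sigma5Tail_eq_C h₆, h₆₄, h₆₂, h₆₀, hr₄, hr₂, hr₀]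
  simp only [← HahnSeries.C_mul_eq_smul, map_add, map_mul, map_neg, map_pow, map_ofNat,
    zp_ofNat, zp_natCast]
  ring

theorem sigma5three_mul_self_sub_eq_of_tail_eq_zero (h₃ : ∀ k : ℕ, 1 ≤ k → H 3 k = 0)
    (h₆ : ∀ k : ℕ, 1 ≤ k → H 6 k = 0) (h₆₄ : H 6 (-4) = -(H 3 (-2)) ^ 2)
    (h₆₂ : H 6 (-2) = -(2 * H 3 0 * H 3 (-2))) (h₆₀ : H 6 0 = -(H 3 0) ^ 2) :
    sigma5three H * sigma5three H - (2 * H 3 (-2)) • (zp 2 * sigma5three H)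
      = sigma5 H 6 + (2 * H 3 0) • sigma5three H := by
  rw [sigma5three_mul_self_sub, sigma5three_eq, sigma5_eq, sigma5Tail_eq_C h₃,
    sigma5Tail_eq_C h₆, h₆₄, h₆₂, h₆₀]
  simp only [← HahnSeries.C_mul_eq_smul, map_mul, map_neg, map_pow, map_ofNat, zp_ofNat,
    zp_natCast]
  ring

theorem sigma5_six_mem_closure (h₆ : ∀ k : ℕ, 1 ≤ k → H 6 k = 0) :
    sigma5 H 6 ∈ Subring.closure (insert (zp 2) (Set.range HahnSeries.C)) := by
  rw [sigma5_eq, sigma5Tail_eq_C h₆]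
  simp only [← HahnSeries.C_mul_eq_smul, zp_ofNat, zp_natCast]
  rw [show zp 1 ^ 6 = (zp 1 ^ 2) ^ 3 by ring, show zp 1 ^ 4 = (zp 1 ^ 2) ^ 2 by ring]
  refine add_mem (add_mem (add_mem (pow_mem ?_ 3) (mul_mem ?_ (pow_mem ?_ 2))) (mul_mem ?_ ?_)) ?_
  all_goals first
    | exact Subring.subset_closure (Set.mem_insert _ _)
    | exact Subring.subset_closure (Set.mem_insert_of_mem _ ⟨_, rfl⟩)

theorem zp_two_mem_mulStabilizer (h₁ : zp 2 * sigma5three H = sigma5 H 5)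
    (h₂ : ∀ j ≥ 5, zp 2 * sigma5 H j = sigma5 H (j + 2) + H j (-4) • sigma5 H 6) :
    zp 2 ∈ (Submodule.span ℂ (sigma5Set H)).mulStabilizer := by
  have hMⱼ : ∀ j ≥ 5, sigma5 H j ∈ Submodule.span ℂ (sigma5Set H) :=
    fun j hj => Submodule.subset_span (sigma5_mem_sigma5Set hj)
  refine Submodule.mem_mulStabilizer_span_iff.2 ?_
  rintro s (rfl | ⟨j, hj : 5 ≤ j, rfl⟩)
  · exact h₁ ▸ hMⱼ 5 le_rfl
  · rw [h₂ j hj]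
    exact add_mem (hMⱼ _ (by omega)) (Submodule.smul_mem _ _ (hMⱼ 6 (by norm_num)))

theorem sigma5three_mem_mulStabilizer (h₁ : zp 2 * sigma5three H = sigma5 H 5)
    (h₂ : ∀ j ≥ 5, zp 2 * sigma5 H j = sigma5 H (j + 2) + H j (-4) • sigma5 H 6)
    (h₃ : sigma5three H * sigma5three H - (2 * H 3 (-2)) • (zp 2 * sigma5three H)
      = sigma5 H 6 + (2 * H 3 0) • sigma5three H)
    (hp₆ : sigma5 H 6 ∈ (Submodule.span ℂ (sigma5Set H)).mulStabilizer) :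
    sigma5three H ∈ (Submodule.span ℂ (sigma5Set H)).mulStabilizer := by
  set M := Submodule.span ℂ (sigma5Set H)
  have hM₃ : sigma5three H ∈ M := Submodule.subset_span sigma5three_mem_sigma5Set
  have hz := zp_two_mem_mulStabilizer h₁ h₂
  have hsq : sigma5three H * sigma5three H ∈ M := by
    rw [← sub_add_cancel (sigma5three H * sigma5three H), h₃]
    exact add_mem (add_mem (Submodule.subset_span (sigma5_mem_sigma5Set (by norm_num)))
      (M.smul_mem _ hM₃)) (M.smul_mem _ (hz _ hM₃))
  refine Submodule.mem_mulStabilizer_span_iff.2 ?_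
  rintro s (rfl | ⟨j, hj : 5 ≤ j, rfl⟩)
  · exact hsq
  · refine Nat.le_induction_two_step (P := fun j => sigma5three H * sigma5 H j ∈ M) ?_ ?_
      (fun j hj ih => ?_) j hj
    · rw [← h₁, mul_left_comm]
      exact hz _ hsq
    · rw [mul_comm]
      exact hp₆ _ hM₃
    · rw [eq_sub_of_add_eq (h₂ j hj).symm, mul_sub, mul_left_comm, mul_smul_comm,
        mul_comm _ (sigma5 H 6)]
      exact sub_mem (hz _ ih) (M.smul_mem _ (hp₆ _ hM₃))

theorem closed_of_identities (h₁ : zp 2 * sigma5three H = sigma5 H 5)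
    (h₂ : ∀ j ≥ 5, zp 2 * sigma5 H j = sigma5 H (j + 2) + H j (-4) • sigma5 H 6)
    (h₃ : sigma5three H * sigma5three H - (2 * H 3 (-2)) • (zp 2 * sigma5three H)
      = sigma5 H 6 + (2 * H 3 0) • sigma5three H)
    (h₆ : sigma5 H 6 ∈ Subring.closure (insert (zp 2) (Set.range HahnSeries.C))) :
    (∀ x ∈ sigma5Set H, ∀ y ∈ sigma5Set H, x * y ∈ Submodule.span ℂ (sigma5Set H)) ∧
      ∀ x ∈ sigma5Set H, zp 2 * x ∈ Submodule.span ℂ (sigma5Set H) := by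
  set M := Submodule.span ℂ (sigma5Set H)
  have hz := zp_two_mem_mulStabilizer h₁ h₂
  have hp₆ : sigma5 H 6 ∈ M.mulStabilizer := Subring.closure_le.2
    (Set.insert_subset hz (Set.range_subset_iff.2 (HahnSeries.C_mem_mulStabilizer M))) h₆
  have hp₃ := sigma5three_mem_mulStabilizer h₁ h₂ h₃ hp₆
  have hpⱼ : ∀ j ≥ 5, sigma5 H j ∈ M.mulStabilizer := by
    refine Nat.le_induction_two_step (h₁ ▸ Subring.mul_mem _ hz hp₃) hp₆ fun j hj hpj => ?_
    rw [eq_sub_of_add_eq (h₂ j hj).symm, ← HahnSeries.C_mul_eq_smul]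
    exact sub_mem (Subring.mul_mem _ hz hpj)
      (Subring.mul_mem _ (HahnSeries.C_mem_mulStabilizer M _) hp₆)
  have hS : ∀ x ∈ sigma5Set H, x ∈ M.mulStabilizer := by
    rintro x (rfl | ⟨j, hj : 5 ≤ j, rfl⟩)
    exacts [hp₃, hpⱼ j hj]
  exact ⟨fun x hx y hy => hS x hx y (Submodule.subset_span hy),
    fun x hx => hz x (Submodule.subset_span hx)⟩

end Converse

theorem sigma5_closed_iff (H : ℕ → ℤ → ℂ) :
    ((∀ x ∈ sigma5Set H, ∀ y ∈ sigma5Set H, x * y ∈ Submodule.span ℂ (sigma5Set H)) ∧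
     (∀ x ∈ sigma5Set H, zp 2 * x ∈ Submodule.span ℂ (sigma5Set H)))
    ↔
    ((∀ k : ℕ, 1 ≤ k → H 3 (k:ℤ) = 0 ∧ ∀ j : ℕ, 5 ≤ j → H j (k:ℤ) = 0) ∧
     (H 5 (-4) = H 3 (-2) ∧ H 5 (-2) = H 3 0 ∧ H 5 0 = 0) ∧
     (H 6 (-4) = -(H 3 (-2))^2 ∧ H 6 (-2) = -(2 * H 3 0 * H 3 (-2)) ∧
        H 6 0 = -(H 3 0)^2) ∧
     (∀ j : ℕ, 5 ≤ j →
        H (j+2) (-4) = H j (-2) + (H 3 (-2))^2 * H j (-4) ∧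
        H (j+2) (-2) = H j 0 + 2 * H 3 0 * H 3 (-2) * H j (-4) ∧
        H (j+2) 0 = (H 3 0)^2 * H j (-4))) := by
  constructor
  · rintro ⟨hmul, hz⟩
    have hz₃ := hz _ sigma5three_mem_sigma5Set
    exact conditions_of_identities (zp_two_mul_sigma5three_eq_of_mem_span hz₃)
      (fun j hj => zp_two_mul_sigma5_eq_of_mem_span hj (hz _ (sigma5_mem_sigma5Set hj)))
      (sigma5three_mul_self_sub_eq_of_mem_span
        (hmul _ sigma5three_mem_sigma5Set _ sigma5three_mem_sigma5Set) hz₃)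
  · rintro ⟨htail, ⟨h₅₄, h₅₂, h₅₀⟩, ⟨h₆₄, h₆₂, h₆₀⟩, hrec⟩
    have hT₃ := fun k hk => (htail k hk).1
    have hT : ∀ j ≥ 5, ∀ k : ℕ, 1 ≤ k → H j k = 0 := fun j hj k hk => (htail k hk).2 j hj
    exact closed_of_identities
      (zp_two_mul_sigma5three_eq_of_tail_eq_zero hT₃ (hT 5 le_rfl) h₅₄ h₅₂ h₅₀)
      (fun j hj => zp_two_mul_sigma5_eq_of_tail_eq_zero (hT j hj) (hT (j + 2) (by omega))
        (hT 6 (by norm_num)) h₆₄ h₆₂ h₆₀ (hrec j hj).1 (hrec j hj).2.1 (hrec j hj).2.2)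
      (sigma5three_mul_self_sub_eq_of_tail_eq_zero hT₃ (hT 6 (by norm_num)) h₆₄ h₆₂ h₆₀)
      (sigma5_six_mem_closure (hT 6 (by norm_num)))

end
end

section
/- For all a, b ∈ ℂ, setting p₃ = z³ + a z² + b and p₅ = z² · p₃ = z⁵ + a z⁴ + b z² in ℂ[z], the (3,5)-plane-curve identity p₅³ − p₃⁵ + 2a p₃³ p₅ − a² p₃ p₅² + 2b p₃⁴ − 2ab p₃² p₅ − b² p₃³ = 0 holds in ℂ[z]; i.e., with H³₋₂ = a and H³₀ = b, the generators p₃, p₅ of the closed subset W₅ ⊂ Σ₅ parameterize a plane (3,5) curve of genus zero. -/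
open Polynomial

/-! Once `p₅ = z² p₃` is substituted, the left-hand side factors as
`p₃³ ((z³)² - (p₃ - a z² - b)²)`, and `p₃ - a z² - b = z³`. -/

theorem plane_curve_35_eq_zero {R : Type*} [CommRing R] {z a b p3 p5 : R}
    (hp3 : p3 = z^3 + a * z^2 + b) (hp5 : p5 = z^2 * p3) :
    p5^3 - p3^5 + 2*a * p3^3 * p5 - a^2 * p3 * p5^2
      + 2*b * p3^4 - 2*a*b * p3^2 * p5 - b^2 * p3^3 = 0 := by
  have hfactor : p5^3 - p3^5 + 2*a * p3^3 * p5 - a^2 * p3 * p5^2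
      + 2*b * p3^4 - 2*a*b * p3^2 * p5 - b^2 * p3^3
      = p3^3 * ((z^3)^2 - (p3 - (a * z^2 + b))^2) := by
    rw [hp5]; ring
  rw [hfactor, hp3]
  ring

/-- The plane `(3,5)`-curve identity of genus zero satisfied by the generators
`p₃ = z³ + a z² + b` and `p₅ = z² p₃` of the closed subset `W₅ ⊂ Σ₅`
(with `a = H³₋₂`, `b = H³₀`). -/
theorem sigma5_35_curve (a b : ℂ) (p3 p5 : Polynomial ℂ)
    (hp3 : p3 = X^3 + C a * X^2 + C b)
    (hp5 : p5 = X^2 * p3) :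
    p5^3 - p3^5 + C (2*a) * p3^3 * p5 - C (a^2) * p3 * p5^2
      + C (2*b) * p3^4 - C (2*a*b) * p3^2 * p5 - C (b^2) * p3^3 = 0 := by
  simp only [map_mul, map_pow, map_ofNat]
  exact plane_curve_35_eq_zero hp3 hp5
end
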